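/- arXiv:2006.11123 — 2 statements merged into one kernel-verified Lean document; each statement's English description precedes it below -/
import Mathlib

section
/- If T is a location measure (i.e., T(ax+b) = aT(x)+b for all a,b ∈ ℝ) that is additive on independent random variables (T(x+y) = T(x)+T(y)) and continuous at the standard normal distribution (z_n →_d N(0,1) implies T(z_n) → 0), then T(x) = E(x) for every random variable x with finite second moment. -/
open MeasureTheory ProbabilityTheory Filter

/-!
Let `m` be the mean of `μ`, let `x₁, x₂, …` be i.i.d. with law `μ` and `z ~ N(0,1)` independent
of them, and let `x̄ₙ` be the sample mean. Additivity and equivariance give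
`T(x̄ₙ - m + z) = T(μ) - m + T(N(0,1))`, and `T(N(0,1)) = 0` by continuity along the constant
sequence. By the strong law of large numbers `x̄ₙ - m + z → z` almost surely, hence in
distribution, so continuity at `N(0,1)` forces the constant `T(μ) - m` to vanish.
-/

open Finset Topology

def IsAffineEquivariant (T : ProbabilityMeasure ℝ → ℝ) : Prop :=
  ∀ (μ : ProbabilityMeasure ℝ) (a b : ℝ),
    T (μ.map ((measurable_id.const_mul a).add_const b).aemeasurable) = a * T μ + b

def IsAdditiveOnIndep (T : ProbabilityMeasure ℝ → ℝ) : Prop :=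
  ∀ {Ω : Type} [MeasurableSpace Ω] (P : ProbabilityMeasure Ω) {x y : Ω → ℝ}
    (hx : Measurable x) (hy : Measurable y), IndepFun x y P →
    T (P.map (hx.add hy).aemeasurable) = T (P.map hx.aemeasurable) + T (P.map hy.aemeasurable)

noncomputable def iidSequence {α : Type*} [MeasurableSpace α] (μ : ProbabilityMeasure α) :
    ProbabilityMeasure (ℕ → α) :=
  ⟨Measure.infinitePi fun _ ↦ μ, inferInstance⟩

@[simp]
theorem toMeasure_iidSequence {α : Type*} [MeasurableSpace α] (μ : ProbabilityMeasure α) :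
    (iidSequence μ : Measure (ℕ → α)) = Measure.infinitePi fun _ ↦ μ :=
  rfl

noncomputable def sampleMean (n : ℕ) (ω : ℕ → ℝ) : ℝ :=
  (n : ℝ)⁻¹ * ∑ i ∈ range n, ω i

@[fun_prop]
theorem measurable_sampleMean (n : ℕ) : Measurable (sampleMean n) :=
  (Finset.measurable_sum _ fun i _ ↦ measurable_pi_apply i).const_mul _

theorem ae_tendsto_sampleMean (μ : ProbabilityMeasure ℝ) (hμ : Integrable id (μ : Measure ℝ)) :
    ∀ᵐ ω ∂(iidSequence μ : Measure (ℕ → ℝ)),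
      Tendsto (fun n ↦ sampleMean n ω) atTop (𝓝 (∫ x, x ∂(μ : Measure ℝ))) := by
  rw [toMeasure_iidSequence]
  have hpres := measurePreserving_eval_infinitePi fun _ : ℕ ↦ (μ : Measure ℝ)
  have hident (i : ℕ) : IdentDistrib (fun ω : ℕ → ℝ ↦ ω i) (fun ω : ℕ → ℝ ↦ ω 0)
      (Measure.infinitePi fun _ ↦ μ) (Measure.infinitePi fun _ ↦ μ) :=
    ⟨(hpres i).measurable.aemeasurable, (hpres 0).measurable.aemeasurable,
      by rw [(hpres i).map_eq, (hpres 0).map_eq]⟩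
  have hindep := iIndepFun_infinitePi (P := fun _ : ℕ ↦ (μ : Measure ℝ)) (X := fun _ x ↦ x)
    fun _ ↦ measurable_id
  have hmean :
      ∫ ω, ω 0 ∂(Measure.infinitePi fun _ ↦ (μ : Measure ℝ)) = ∫ x, x ∂(μ : Measure ℝ) := by
    conv_rhs => rw [← (hpres 0).map_eq]
    exact (integral_map (hpres 0).measurable.aemeasurable aestronglyMeasurable_id).symm
  simpa [sampleMean, hmean] using strong_law_ae (fun i (ω : ℕ → ℝ) ↦ ω i)
    ((hpres 0).integrable_comp_of_integrable hμ) (fun i j hij ↦ hindep.indepFun hij) hident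

theorem tendsto_map_prod_add_of_ae_tendsto_zero {Ω : Type*} [MeasurableSpace Ω]
    (P : ProbabilityMeasure Ω) (Q : ProbabilityMeasure ℝ) {U : ℕ → Ω → ℝ}
    (hU : ∀ n, Measurable (U n)) (hlim : ∀ᵐ ω ∂(P : Measure Ω), Tendsto (U · ω) atTop (𝓝 0)) :
    Tendsto (fun n ↦ (P.prod Q).map (f := fun p ↦ U n p.1 + p.2) (by fun_prop)) atTop (𝓝 Q) := by
  have hlim' : ∀ᵐ p ∂(P.prod Q : Measure (Ω × ℝ)),
      Tendsto (fun n ↦ U n p.1 + p.2) atTop (𝓝 p.2) := by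
    filter_upwards [Measure.quasiMeasurePreserving_fst.ae hlim] with p hp
    simpa using hp.add_const p.2
  have h := (tendstoInDistribution_of_ae_tendsto (fun n ↦ by fun_prop) (by fun_prop) hlim').tendsto
  rwa [show (⟨(P.prod Q : Measure (Ω × ℝ)).map Prod.snd, _⟩ : ProbabilityMeasure ℝ) = Q from
    ProbabilityMeasure.map_snd_prod P Q] at h

section

variable {T : ProbabilityMeasure ℝ → ℝ} {Ω : Type} [MeasurableSpace Ω]

theorem IsAffineEquivariant.map_affine (hloc : IsAffineEquivariant T) (P : ProbabilityMeasure Ω)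
    {X : Ω → ℝ} (hX : AEMeasurable X P) (a b : ℝ) :
    T (P.map ((hX.const_mul a).add_const b)) = a * T (P.map hX) + b := by
  have h : P.map ((hX.const_mul a).add_const b)
      = (P.map hX).map ((measurable_id.const_mul a).add_const b).aemeasurable := by
    apply Subtype.ext
    simp only [ProbabilityMeasure.val_eq_to_measure, ProbabilityMeasure.toMeasure_map]
    rw [AEMeasurable.map_map_of_aemeasurable (by fun_prop) hX]
    rfl
  rw [h, hloc]

theorem IsAffineEquivariant.map_const (hloc : IsAffineEquivariant T) (P : ProbabilityMeasure Ω)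
    (c : ℝ) : T (P.map (aemeasurable_const (b := c))) = c := by
  simpa using hloc.map_affine P (aemeasurable_const (b := (0 : ℝ))) 0 c

theorem IsAdditiveOnIndep.map_sum_range (hadd : IsAdditiveOnIndep T)
    (hloc : IsAffineEquivariant T) (P : ProbabilityMeasure Ω) {X : ℕ → Ω → ℝ}
    (hX : ∀ i, Measurable (X i)) (hindep : iIndepFun X P) {μ : ProbabilityMeasure ℝ}
    (hlaw : ∀ i, P.map (hX i).aemeasurable = μ) (n : ℕ) :
    T (P.map (Finset.measurable_sum (range n) fun i _ ↦ hX i).aemeasurable) = n * T μ := by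
  induction n with
  | zero => simpa using hloc.map_const P 0
  | succ n ih =>
    have hS := Finset.measurable_sum (range n) fun i _ ↦ hX i
    have hindep_n : IndepFun (fun ω ↦ ∑ i ∈ range n, X i ω) (X n) P := by
      simpa [← Finset.sum_apply] using hindep.indepFun_finsetSum_of_notMem hX (s := range n)
        (by simp)
    have hsplit : P.map (Finset.measurable_sum (range (n + 1)) fun i _ ↦ hX i).aemeasurable
        = P.map (hS.add (hX n)).aemeasurable := by
      congr 1
      funext ω
      simp [Finset.sum_range_succ]
    rw [hsplit, hadd P hS (hX n) hindep_n, ih, hlaw]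
    push_cast
    ring

theorem IsAdditiveOnIndep.map_prod_add (hadd : IsAdditiveOnIndep T) (P : ProbabilityMeasure Ω)
    (Q : ProbabilityMeasure ℝ) {f : Ω → ℝ} (hf : Measurable f) :
    T ((P.prod Q).map (f := fun p ↦ f p.1 + p.2) (by fun_prop)) =
      T (P.map hf.aemeasurable) + T Q := by
  have hfst : (P.prod Q).map (hf.comp measurable_fst).aemeasurable = P.map hf.aemeasurable := by
    apply Subtype.ext
    simp only [ProbabilityMeasure.val_eq_to_measure, ProbabilityMeasure.toMeasure_map,
      ProbabilityMeasure.toMeasure_prod]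
    rw [← Measure.map_map hf measurable_fst, Measure.map_fst_prod, measure_univ, one_smul]
  have h :=
    hadd (P.prod Q) (hf.comp measurable_fst) measurable_snd (indepFun_prod hf measurable_id)
  rw [hfst, ProbabilityMeasure.map_snd_prod] at h
  exact h

theorem IsAdditiveOnIndep.map_sampleMean_add (hadd : IsAdditiveOnIndep T)
    (hloc : IsAffineEquivariant T) (μ : ProbabilityMeasure ℝ) (c : ℝ) {n : ℕ} (hn : n ≠ 0) :
    T ((iidSequence μ).map ((measurable_sampleMean n).add_const c).aemeasurable) = T μ + c := by
  have hS := Finset.measurable_sum (range n) fun i _ ↦ measurable_pi_apply (X := fun _ ↦ ℝ) i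
  have hind : iIndepFun (fun i (ω : ℕ → ℝ) ↦ ω i) (iidSequence μ : Measure (ℕ → ℝ)) := by
    rw [toMeasure_iidSequence]
    exact iIndepFun_infinitePi (X := fun _ x ↦ x) fun _ ↦ measurable_id
  have hlaw (i : ℕ) : (iidSequence μ).map (measurable_pi_apply i).aemeasurable = μ := by
    apply Subtype.ext
    exact (measurePreserving_eval_infinitePi _ i).map_eq
  have hsum : T ((iidSequence μ).map hS.aemeasurable) = n * T μ :=
    hadd.map_sum_range hloc _ (fun i ↦ measurable_pi_apply i) hind hlaw n
  calc T ((iidSequence μ).map ((measurable_sampleMean n).add_const c).aemeasurable)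
      = (n : ℝ)⁻¹ * T ((iidSequence μ).map hS.aemeasurable) + c :=
        hloc.map_affine (iidSequence μ) hS.aemeasurable _ _
    _ = T μ + c := by rw [hsum]; field_simp

end

/-- If a location measure (affine equivariant functional on probability distributions on ℝ)
is additive on independent random variables and continuous at `N(0,1)`, then it equals
the mean on every distribution with finite second moment. -/
theorem location_measure_is_mean
    (T : ProbabilityMeasure ℝ → ℝ)
    (hloc : ∀ (μ : ProbabilityMeasure ℝ) (a b : ℝ),
      T (μ.map ((measurable_id.const_mul a).add_const b).aemeasurable) = a * T μ + b)
    (hadd : ∀ (Ω : Type) (_ : MeasurableSpace Ω) (P : Measure Ω)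
      (_ : IsProbabilityMeasure P) (x y : Ω → ℝ)
      (hx : Measurable x) (hy : Measurable y), IndepFun x y P →
      T ⟨P.map (x + y), Measure.isProbabilityMeasure_map (hx.add hy).aemeasurable⟩ =
        T ⟨P.map x, Measure.isProbabilityMeasure_map hx.aemeasurable⟩ +
        T ⟨P.map y, Measure.isProbabilityMeasure_map hy.aemeasurable⟩)
    (hcont : ∀ μs : ℕ → ProbabilityMeasure ℝ,
      Tendsto μs atTop (nhds ⟨gaussianReal 0 1, inferInstance⟩) →
      Tendsto (fun n => T (μs n)) atTop (nhds 0)) :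
    ∀ μ : ProbabilityMeasure ℝ, MemLp id 2 (μ : Measure ℝ) →
      T μ = ∫ x, x ∂(μ : Measure ℝ) := by
  intro μ hμ
  have hadditive : IsAdditiveOnIndep T := by
    intro Ω _ P x y hx hy h
    exact hadd Ω _ P inferInstance x y hx hy h
  let γ : ProbabilityMeasure ℝ := ⟨gaussianReal 0 1, inferInstance⟩
  have hγ : T γ = 0 := tendsto_nhds_unique tendsto_const_nhds (hcont _ tendsto_const_nhds)
  let m := ∫ x, x ∂(μ : Measure ℝ)
  let U (n : ℕ) (ω : ℕ → ℝ) : ℝ := sampleMean n ω + -m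
  have hU (n : ℕ) : Measurable (U n) := by fun_prop
  have hTU (n : ℕ) (hn : n ≠ 0) :
      T (((iidSequence μ).prod γ).map (f := fun p ↦ U n p.1 + p.2) (by fun_prop)) = T μ - m := by
    rw [hadditive.map_prod_add _ γ (hU n), hadditive.map_sampleMean_add hloc μ (-m) hn, hγ]
    ring
  have hlim := hcont _ <| tendsto_map_prod_add_of_ae_tendsto_zero _ γ hU <| by
    filter_upwards [ae_tendsto_sampleMean μ (hμ.integrable one_le_two)] with ω hω
    simpa [U, m] using hω.add_const (-m)
  have hconst : Tendsto (fun _ : ℕ ↦ T μ - m) atTop (𝓝 0) :=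
    hlim.congr' ((eventually_ne_atTop 0).mono hTU)
  linarith [tendsto_nhds_unique tendsto_const_nhds hconst]
end

section
/- Let z = (z_1,…,z_p)' have independent standardized components and let D be a superadditive squared dispersion measure (D(x+y) ≥ D(x)+D(y) for independent x,y, and D(ax+b) = a²D(x)). Then for every unit vector u ∈ ℝ^p, D(u'z) ≥ min_j D(z_j). -/
open MeasureTheory ProbabilityTheory Finset

/-! Write `u'z = ∑ⱼ uⱼ zⱼ`, a sum of independent summands. Superadditivity, applied inductively,
gives `D(u'z) ≥ ∑ⱼ D(uⱼ zⱼ) = ∑ⱼ uⱼ² D(zⱼ)`, a convex combination of the `D(zⱼ)` because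
`∑ⱼ uⱼ² = 1`, hence at least their minimum. -/

section Dispersion

variable {Ω : Type*} {D : (Ω → ℝ) → ℝ}

lemma dispersion_zero (hD : ∀ (x : Ω → ℝ) (a : ℝ), D (fun ω => a * x ω) = a ^ 2 * D x) :
    D (fun _ => 0) = 0 := by
  simpa using hD 0 0

lemma sum_dispersion_le_dispersion_sum [MeasurableSpace Ω] {P : Measure Ω}
    {ι : Type*} {X : ι → Ω → ℝ} (hD0 : D (fun _ => 0) = 0)
    (hsuper : ∀ x y : Ω → ℝ, Measurable x → Measurable y → IndepFun x y P →
      D x + D y ≤ D (fun ω => x ω + y ω))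
    (hX : ∀ i, Measurable (X i)) (hindep : iIndepFun X P) (s : Finset ι) :
    ∑ i ∈ s, D (X i) ≤ D (fun ω => ∑ i ∈ s, X i ω) := by
  classical
  induction s using Finset.induction with
  | empty => simpa using hD0.ge
  | @insert a s ha ih =>
    have hindep_rest : IndepFun (X a) (fun ω => ∑ i ∈ s, X i ω) P := by
      simpa only [Finset.sum_fn] using (hindep.indepFun_finsetSum_of_notMem hX ha).symm
    calc ∑ i ∈ insert a s, D (X i) = D (X a) + ∑ i ∈ s, D (X i) := sum_insert ha
      _ ≤ D (X a) + D (fun ω => ∑ i ∈ s, X i ω) := by gcongr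
      _ ≤ D (fun ω => X a ω + ∑ i ∈ s, X i ω) :=
          hsuper _ _ (hX a) (Finset.measurable_sum s fun i _ => hX i) hindep_rest
      _ = D (fun ω => ∑ i ∈ insert a s, X i ω) := by simp only [sum_insert ha]

end Dispersion

lemma Finset.inf'_le_sum_mul {ι : Type*} {s : Finset ι} (hs : s.Nonempty) (f w : ι → ℝ)
    (hw : ∀ i ∈ s, 0 ≤ w i) (hw1 : ∑ i ∈ s, w i = 1) :
    s.inf' hs f ≤ ∑ i ∈ s, w i * f i :=
  calc s.inf' hs f = ∑ i ∈ s, w i * s.inf' hs f := by rw [← sum_mul, hw1, one_mul]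
    _ ≤ ∑ i ∈ s, w i * f i :=
        sum_le_sum fun i hi => mul_le_mul_of_nonneg_left (inf'_le f hi) (hw i hi)

theorem superadditive_dispersion_projection_bound_general
    {p : ℕ} [NeZero p] {Ω : Type} [MeasurableSpace Ω]
    (P : Measure Ω)
    (z : Fin p → Ω → ℝ)
    (hmeas : ∀ i, Measurable (z i))
    (hindep : iIndepFun z P)
    (D : (Ω → ℝ) → ℝ)
    (hDaff : ∀ (x : Ω → ℝ) (a b : ℝ), D (fun ω => a * x ω + b) = a ^ 2 * D x)
    (hDsuper : ∀ x y : Ω → ℝ, Measurable x → Measurable y → IndepFun x y P →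
      D x + D y ≤ D (fun ω => x ω + y ω))
    (u : Fin p → ℝ) (hu : ∑ i, (u i) ^ 2 = 1) :
    univ.inf' univ_nonempty (fun j => D (z j)) ≤ D (fun ω => ∑ i, u i * z i ω) := by
  have hDhom : ∀ (x : Ω → ℝ) (a : ℝ), D (fun ω => a * x ω) = a ^ 2 * D x := fun x a => by
    simpa using hDaff x a 0
  calc univ.inf' univ_nonempty (fun j => D (z j)) ≤ ∑ i, u i ^ 2 * D (z i) :=
        inf'_le_sum_mul _ _ _ (fun i _ => sq_nonneg (u i)) hu
    _ = ∑ i, D (fun ω => u i * z i ω) := by simp only [hDhom]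
    _ ≤ D (fun ω => ∑ i, u i * z i ω) :=
        sum_dispersion_le_dispersion_sum (dispersion_zero hDhom) hDsuper
          (fun i => (hmeas i).const_mul (u i))
          (hindep.comp (fun i x => u i * x) fun i => measurable_const_mul (u i)) univ

/-- If `z = (z₁,…,z_p)` has independent standardized components (mean 0, variance 1) and
`D` is a superadditive squared dispersion measure (`D(ax+b) = a²D(x)` and
`D(x+y) ≥ D(x)+D(y)` for independent `x, y`), then for every unit vector `u`,
`D(u'z) ≥ min_j D(z_j)`. -/
theorem superadditive_dispersion_projection_bound
    {p : ℕ} [NeZero p] {Ω : Type} [MeasurableSpace Ω]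
    (P : Measure Ω) [IsProbabilityMeasure P]
    (z : Fin p → Ω → ℝ)
    (hmeas : ∀ i, Measurable (z i))
    (hindep : iIndepFun z P)
    (hmean : ∀ i, ∫ ω, z i ω ∂P = 0)
    (hvar : ∀ i, ∫ ω, (z i ω) ^ 2 ∂P = 1)
    (D : (Ω → ℝ) → ℝ)
    (hDaff : ∀ (x : Ω → ℝ) (a b : ℝ), D (fun ω => a * x ω + b) = a ^ 2 * D x)
    (hDsuper : ∀ x y : Ω → ℝ, Measurable x → Measurable y → IndepFun x y P →
      D x + D y ≤ D (fun ω => x ω + y ω))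
    (u : Fin p → ℝ) (hu : ∑ i, (u i) ^ 2 = 1) :
    univ.inf' univ_nonempty (fun j => D (z j)) ≤ D (fun ω => ∑ i, u i * z i ω) :=
  superadditive_dispersion_projection_bound_general P z hmeas hindep D hDaff hDsuper u hu
end
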